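/- Let r_i, r_j > 0 and h_i, h_j ∈ ℝ with (r_i, h_i) ≠ (r_j, h_j). Set z = h_i − h_j, ρ² = r_i² + r_j² + z², and δ = 2 r_i r_j / ρ², so that 0 < δ < 1. Define the circles Xⁱ(u) = (r_i cos 2πu, r_i sin 2πu, h_i) and Xʲ(v) = (r_j cos 2πv, r_j sin 2πv, h_j) and the unit tangent Tʲ(v) = (−sin 2πv, cos 2πv, 0). Then for every u ∈ ℝ the Biot–Savart integral over the circle Γʲ satisfies 2π r_j ∫₀¹ ( (Xⁱ(u) − Xʲ(v)) × Tʲ(v) ) / ‖Xⁱ(u) − Xʲ(v)‖³ dv = (2π r_j / ρ³) ( −z I_s(δ) cos 2πu, −z I_s(δ) sin 2πu, r_i I_s(δ) − r_j I_0(δ) ), where I_s(δ) = ∫₀¹ sin(2πw)(1 − δ sin(2πw))^{−3/2} dw and I_0(δ) = ∫₀¹ (1 − δ sin(2πw))^{−3/2} dw. -/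

import Mathlib

noncomputable section

open Real intervalIntegral

/-- The cross product on `EuclideanSpace ℝ (Fin 3)`. -/
def cross3 (a b : EuclideanSpace ℝ (Fin 3)) : EuclideanSpace ℝ (Fin 3) :=
  (WithLp.equiv 2 (Fin 3 → ℝ)).symm
    ![a 1 * b 2 - a 2 * b 1, a 2 * b 0 - a 0 * b 2, a 0 * b 1 - a 1 * b 0]

/-- The parametric integral `I_s(δ)`. -/
def Is (δ : ℝ) : ℝ :=
  ∫ w in (0:ℝ)..1, Real.sin (2 * π * w) / (1 - δ * Real.sin (2 * π * w)) ^ ((3:ℝ)/2)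

/-- The parametric integral `I_0(δ)`. -/
def I0 (δ : ℝ) : ℝ :=
  ∫ w in (0:ℝ)..1, 1 / (1 - δ * Real.sin (2 * π * w)) ^ ((3:ℝ)/2)

/-! Since ‖Xⁱ(u) − Xʲ(v)‖² = ρ² (1 − δ cos 2π(v − u)), every component of the integrand is a
trigonometric factor times `g (cos 2π(v − u))`, where `g s = (1 − δ s)^(-3/2)` is continuous on
`[-1, 1]` because `δ < 1`. Translating `v` by `u` (periodicity) and expanding the trigonometric
factor by the addition formulas leaves integrals of `cos 2πt · g (cos 2πt)`, of `g (cos 2πt)` and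
of `sin 2πt · g (cos 2πt)`. The last ones vanish, the integrand being odd under `t ↦ 1 − t`; in
the others the substitution `t ↦ 1/4 − t` turns `cos 2πt` into `sin 2πt`, giving `I_s` and `I_0`.
-/

open MeasureTheory Set Function

namespace Function.Periodic

variable {E : Type*} [NormedAddCommGroup E] [NormedSpace ℝ E] {f : ℝ → E} {T : ℝ}

theorem intervalIntegral_comp_add_right (hf : Periodic f T) (u : ℝ) :
    ∫ x in 0..T, f (x + u) = ∫ x in 0..T, f x := by
  rw [intervalIntegral.integral_comp_add_right, zero_add, add_comm T,
    hf.intervalIntegral_add_eq u 0, zero_add]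

theorem intervalIntegral_comp_sub_left (hf : Periodic f T) (c : ℝ) :
    ∫ x in 0..T, f (c - x) = ∫ x in 0..T, f x := by
  rw [intervalIntegral.integral_comp_sub_left, sub_zero]
  simpa using hf.intervalIntegral_add_eq (c - T) 0

end Function.Periodic

theorem intervalIntegral_piLp_apply {q : ENNReal} [Fact (1 ≤ q)] {ι : Type*} [Fintype ι]
    {F : ι → Type*} [∀ i, NormedAddCommGroup (F i)] [∀ i, NormedSpace ℝ (F i)]
    [∀ i, CompleteSpace (F i)] {f : ℝ → PiLp q F} {a b : ℝ}
    (hf : ∀ i, IntervalIntegrable (f · i) volume a b) (i : ι) :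
    (∫ x in a..b, f x) i = ∫ x in a..b, f x i := by
  simp only [intervalIntegral, PiLp.sub_apply, eval_integral_piLp (fun i => (hf i).1),
    eval_integral_piLp (fun i => (hf i).2)]

theorem intervalIntegral_toLp_three {f₀ f₁ f₂ : ℝ → ℝ} {a b : ℝ}
    (h₀ : IntervalIntegrable f₀ volume a b) (h₁ : IntervalIntegrable f₁ volume a b)
    (h₂ : IntervalIntegrable f₂ volume a b) :
    ∫ x in a..b,
        ((WithLp.equiv 2 (Fin 3 → ℝ)).symm ![f₀ x, f₁ x, f₂ x] : EuclideanSpace ℝ (Fin 3)) =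
      (WithLp.equiv 2 (Fin 3 → ℝ)).symm
        ![∫ x in a..b, f₀ x, ∫ x in a..b, f₁ x, ∫ x in a..b, f₂ x] := by
  ext i
  rw [intervalIntegral_piLp_apply fun j => by fin_cases j; exacts [h₀, h₁, h₂]]
  fin_cases i <;> rfl

theorem two_mul_mul_lt_of_ne {r r' h h' : ℝ} (hne : (r, h) ≠ (r', h')) :
    2 * r * r' < r ^ 2 + r' ^ 2 + (h - h') ^ 2 := by
  by_contra hle
  apply hne
  have hr : (r - r') ^ 2 = 0 := by nlinarith [sq_nonneg (r - r'), sq_nonneg (h - h')]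
  have hh : (h - h') ^ 2 = 0 := by nlinarith [sq_nonneg (r - r'), sq_nonneg (h - h')]
  rw [sq_eq_zero_iff, sub_eq_zero] at hr hh
  rw [hr, hh]

theorem pow_three_eq_sq_rpow {x : ℝ} (hx : 0 ≤ x) : x ^ 3 = (x ^ 2) ^ ((3 : ℝ) / 2) := by
  rw [← Real.rpow_natCast, ← Real.rpow_natCast x 2, ← Real.rpow_mul hx]
  norm_num

section UnitCircleIntegrals

variable (g : ℝ → ℝ)

theorem integral_comp_cos_eq_integral_comp_sin :
    ∫ t in 0..1, g (cos (2 * π * t)) = ∫ t in 0..1, g (sin (2 * π * t)) := by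
  have hper : Periodic (fun t => g (sin (2 * π * t))) 1 := fun t => by
    simp only [mul_add, mul_one, sin_add_two_pi]
  rw [← hper.intervalIntegral_comp_sub_left (1 / 4)]
  refine integral_congr fun t _ => ?_
  simp only [show 2 * π * (1 / 4 - t) = π / 2 - 2 * π * t by ring, sin_pi_div_two_sub]

theorem integral_sin_mul_comp_cos_eq_zero :
    ∫ t in 0..1, sin (2 * π * t) * g (cos (2 * π * t)) = 0 := by
  have hodd : ∀ t : ℝ, sin (2 * π * (1 - t)) * g (cos (2 * π * (1 - t))) =
      -(sin (2 * π * t) * g (cos (2 * π * t))) := fun t => by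
    simp only [mul_sub, mul_one, sin_two_pi_sub, cos_two_pi_sub, neg_mul]
  have h := intervalIntegral.integral_comp_sub_left
    (fun t => sin (2 * π * t) * g (cos (2 * π * t))) (a := 0) (b := 1) 1
  simp only [hodd, intervalIntegral.integral_neg, sub_self, sub_zero] at h
  linarith

theorem integral_comp_cos_sub (u : ℝ) :
    ∫ v in 0..1, g (cos (2 * π * (v - u))) = ∫ t in 0..1, g (sin (2 * π * t)) := by
  have hper : Periodic (fun v => g (cos (2 * π * (v - u)))) 1 := fun v => by
    simp only [add_sub_right_comm, mul_add, mul_one, cos_add_two_pi]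
  rw [← hper.intervalIntegral_comp_add_right u]
  simp only [add_sub_cancel_right]
  exact integral_comp_cos_eq_integral_comp_sin g

variable {g} (hg : ContinuousOn g (Icc (-1) 1))
include hg

theorem ContinuousOn.continuous_comp_cos_two_pi_mul : Continuous fun t => g (cos (2 * π * t)) :=
  hg.comp_continuous (by fun_prop) fun t => ⟨neg_one_le_cos _, cos_le_one _⟩

theorem ContinuousOn.intervalIntegrable_mul_comp_cos_sub {φ : ℝ → ℝ} (hφ : Continuous φ)
    (u : ℝ) {a b : ℝ} : IntervalIntegrable (fun v => φ v * g (cos (2 * π * (v - u)))) volume a b :=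
  (hφ.mul (hg.continuous_comp_cos_two_pi_mul.comp (continuous_sub_right u))).intervalIntegrable a b

theorem integral_cos_mul_comp_cos_sub (u : ℝ) :
    ∫ v in 0..1, cos (2 * π * v) * g (cos (2 * π * (v - u))) =
      cos (2 * π * u) * ∫ t in 0..1, sin (2 * π * t) * g (sin (2 * π * t)) := by
  have hper : Periodic (fun v => cos (2 * π * v) * g (cos (2 * π * (v - u)))) 1 := fun v => by
    simp only [add_sub_right_comm, mul_add, mul_one, cos_add_two_pi]
  rw [← hper.intervalIntegral_comp_add_right u,
    ← integral_comp_cos_eq_integral_comp_sin fun s => s * g s]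
  set G := fun t => g (cos (2 * π * t))
  have hG : Continuous G := hg.continuous_comp_cos_two_pi_mul
  calc ∫ t in 0..1, cos (2 * π * (t + u)) * g (cos (2 * π * (t + u - u)))
      = ∫ t in 0..1, (cos (2 * π * u) * (cos (2 * π * t) * G t) -
          sin (2 * π * u) * (sin (2 * π * t) * G t)) := by
        refine integral_congr fun t _ => ?_
        simp only [G, add_sub_cancel_right, mul_add, cos_add]
        ring
    _ = cos (2 * π * u) * ∫ t in 0..1, cos (2 * π * t) * G t := by
        rw [intervalIntegral.integral_sub (Continuous.intervalIntegrable (by fun_prop) _ _)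
          (Continuous.intervalIntegrable (by fun_prop) _ _), intervalIntegral.integral_const_mul,
          intervalIntegral.integral_const_mul, integral_sin_mul_comp_cos_eq_zero, mul_zero,
          sub_zero]

theorem integral_sin_mul_comp_cos_sub (u : ℝ) :
    ∫ v in 0..1, sin (2 * π * v) * g (cos (2 * π * (v - u))) =
      sin (2 * π * u) * ∫ t in 0..1, sin (2 * π * t) * g (sin (2 * π * t)) := by
  have hper : Periodic (fun v => sin (2 * π * v) * g (cos (2 * π * (v - u)))) 1 := fun v => by
    simp only [add_sub_right_comm, mul_add, mul_one, sin_add_two_pi, cos_add_two_pi]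
  rw [← hper.intervalIntegral_comp_add_right u,
    ← integral_comp_cos_eq_integral_comp_sin fun s => s * g s]
  set G := fun t => g (cos (2 * π * t))
  have hG : Continuous G := hg.continuous_comp_cos_two_pi_mul
  calc ∫ t in 0..1, sin (2 * π * (t + u)) * g (cos (2 * π * (t + u - u)))
      = ∫ t in 0..1, (sin (2 * π * u) * (cos (2 * π * t) * G t) +
          cos (2 * π * u) * (sin (2 * π * t) * G t)) := by
        refine integral_congr fun t _ => ?_
        simp only [G, add_sub_cancel_right, mul_add, sin_add]
        ring
    _ = sin (2 * π * u) * ∫ t in 0..1, cos (2 * π * t) * G t := by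
        rw [intervalIntegral.integral_add (Continuous.intervalIntegrable (by fun_prop) _ _)
          (Continuous.intervalIntegrable (by fun_prop) _ _), intervalIntegral.integral_const_mul,
          intervalIntegral.integral_const_mul, integral_sin_mul_comp_cos_eq_zero, mul_zero,
          add_zero]

theorem integral_affine_mul_comp_cos_sub (a b u : ℝ) :
    ∫ v in 0..1, (a * cos (2 * π * (v - u)) - b) * g (cos (2 * π * (v - u))) =
      a * (∫ t in 0..1, sin (2 * π * t) * g (sin (2 * π * t))) -
        b * ∫ t in 0..1, g (sin (2 * π * t)) := by
  have hG : Continuous fun t => g (sin (2 * π * t)) :=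
    hg.comp_continuous (by fun_prop) fun t => ⟨neg_one_le_sin _, sin_le_one _⟩
  have hsG : Continuous fun t => sin (2 * π * t) * g (sin (2 * π * t)) :=
    (continuous_sin.comp (by fun_prop)).mul hG
  rw [integral_comp_cos_sub (fun s => (a * s - b) * g s) u, ← intervalIntegral.integral_const_mul,
    ← intervalIntegral.integral_const_mul, ← intervalIntegral.integral_sub
      ((hsG.intervalIntegrable 0 1).const_mul a) ((hG.intervalIntegrable 0 1).const_mul b)]
  exact integral_congr fun t _ => by ring

end UnitCircleIntegrals

def coaxialKernel (δ s : ℝ) : ℝ := ((1 - δ * s) ^ ((3 : ℝ) / 2))⁻¹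

theorem continuousOn_coaxialKernel {δ : ℝ} (hδ : |δ| < 1) :
    ContinuousOn (coaxialKernel δ) (Icc (-1) 1) := by
  have hpos : ∀ s ∈ Icc (-1 : ℝ) 1, 0 < 1 - δ * s := fun s hs => by
    have : |δ * s| < 1 := by
      rw [abs_mul]; exact mul_lt_one_of_nonneg_of_lt_one_left (abs_nonneg _) hδ (abs_le.2 hs)
    linarith [le_abs_self (δ * s)]
  refine ContinuousOn.inv₀ ?_ fun s hs => (rpow_pos_of_pos (hpos s hs) _).ne'
  exact ContinuousOn.rpow_const (by fun_prop) fun s hs => Or.inl (hpos s hs).ne'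

theorem Is_eq_integral_coaxialKernel (δ : ℝ) :
    Is δ = ∫ t in 0..1, sin (2 * π * t) * coaxialKernel δ (sin (2 * π * t)) := by
  simp only [Is, coaxialKernel, div_eq_mul_inv]

theorem I0_eq_integral_coaxialKernel (δ : ℝ) :
    I0 δ = ∫ t in 0..1, coaxialKernel δ (sin (2 * π * t)) := by
  simp only [I0, coaxialKernel, one_div]

def coaxialCircle (r h t : ℝ) : EuclideanSpace ℝ (Fin 3) :=
  (WithLp.equiv 2 (Fin 3 → ℝ)).symm ![r * cos (2 * π * t), r * sin (2 * π * t), h]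

def circleTangent (t : ℝ) : EuclideanSpace ℝ (Fin 3) :=
  (WithLp.equiv 2 (Fin 3 → ℝ)).symm ![-sin (2 * π * t), cos (2 * π * t), 0]

section CoaxialCircles

variable (r h r' h' u v : ℝ)

theorem coaxialCircle_sub_coaxialCircle :
    coaxialCircle r h u - coaxialCircle r' h' v = (WithLp.equiv 2 (Fin 3 → ℝ)).symm
      ![r * cos (2 * π * u) - r' * cos (2 * π * v), r * sin (2 * π * u) - r' * sin (2 * π * v),
        h - h'] := by
  ext i
  fin_cases i <;> rfl

theorem norm_coaxialCircle_sub_coaxialCircle_sq :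
    ‖coaxialCircle r h u - coaxialCircle r' h' v‖ ^ 2 =
      r ^ 2 + r' ^ 2 + (h - h') ^ 2 - 2 * r * r' * cos (2 * π * (v - u)) := by
  rw [coaxialCircle_sub_coaxialCircle, EuclideanSpace.real_norm_sq_eq, Fin.sum_univ_three]
  simp only [WithLp.equiv_symm_apply, PiLp.toLp_apply, Matrix.cons_val_zero, Matrix.cons_val_one,
    Matrix.cons_val_two, Matrix.head_cons, Matrix.tail_cons, mul_sub, cos_sub]
  linear_combination r ^ 2 * sin_sq_add_cos_sq (2 * π * u) + r' ^ 2 * sin_sq_add_cos_sq (2 * π * v)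

theorem cross3_coaxialCircle_sub_coaxialCircle_circleTangent :
    cross3 (coaxialCircle r h u - coaxialCircle r' h' v) (circleTangent v) =
      (WithLp.equiv 2 (Fin 3 → ℝ)).symm
        ![-(h - h') * cos (2 * π * v), -(h - h') * sin (2 * π * v),
          r * cos (2 * π * (v - u)) - r'] := by
  rw [coaxialCircle_sub_coaxialCircle]
  ext i
  fin_cases i <;>
    simp only [cross3, circleTangent, WithLp.equiv_symm_apply, PiLp.toLp_apply, Fin.isValue,
      Fin.zero_eta, Fin.mk_one, Fin.reduceFinMk, Matrix.cons_val, Matrix.cons_val_zero,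
      Matrix.cons_val_one, mul_sub, cos_sub]
  · ring
  · ring
  · linear_combination -r' * sin_sq_add_cos_sq (2 * π * v)

end CoaxialCircles

theorem biotSavart_integrand_coaxialCircle {r h r' h' ρ δ : ℝ} (hρ : 0 < ρ)
    (hρ2 : ρ ^ 2 = r ^ 2 + r' ^ 2 + (h - h') ^ 2) (hδρ : δ * ρ ^ 2 = 2 * r * r') (u v : ℝ) :
    (‖coaxialCircle r h u - coaxialCircle r' h' v‖ ^ 3)⁻¹ •
        cross3 (coaxialCircle r h u - coaxialCircle r' h' v) (circleTangent v) =
      (ρ ^ 3)⁻¹ • (WithLp.equiv 2 (Fin 3 → ℝ)).symm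
        ![-(h - h') * (cos (2 * π * v) * coaxialKernel δ (cos (2 * π * (v - u)))),
          -(h - h') * (sin (2 * π * v) * coaxialKernel δ (cos (2 * π * (v - u)))),
          (r * cos (2 * π * (v - u)) - r') * coaxialKernel δ (cos (2 * π * (v - u)))] := by
  have hnorm : ‖coaxialCircle r h u - coaxialCircle r' h' v‖ ^ 2 =
      ρ ^ 2 * (1 - δ * cos (2 * π * (v - u))) := by
    rw [norm_coaxialCircle_sub_coaxialCircle_sq]
    linear_combination -hρ2 + cos (2 * π * (v - u)) * hδρ
  have hD : 0 ≤ 1 - δ * cos (2 * π * (v - u)) :=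
    nonneg_of_mul_nonneg_right (hnorm ▸ sq_nonneg _) (by positivity)
  rw [pow_three_eq_sq_rpow (norm_nonneg _), hnorm, mul_rpow (sq_nonneg _) hD,
    ← pow_three_eq_sq_rpow hρ.le, cross3_coaxialCircle_sub_coaxialCircle_circleTangent]
  ext i
  fin_cases i <;>
    simp only [PiLp.smul_apply, smul_eq_mul, WithLp.equiv_symm_apply, Fin.isValue, Fin.zero_eta,
      Fin.mk_one, Fin.reduceFinMk, Matrix.cons_val, Matrix.cons_val_zero, Matrix.cons_val_one,
      coaxialKernel] <;>
    ring

theorem biot_savart_coaxial_circles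
    (ri rj hi hj z ρ δ : ℝ) (hri : 0 < ri) (hrj : 0 < rj)
    (hne : (ri, hi) ≠ (rj, hj))
    (hz : z = hi - hj)
    (hρ : ρ = Real.sqrt (ri ^ 2 + rj ^ 2 + z ^ 2))
    (hδ : δ = 2 * ri * rj / ρ ^ 2)
    (Xi Xj Tj : ℝ → EuclideanSpace ℝ (Fin 3))
    (hXi : ∀ u : ℝ, Xi u = (WithLp.equiv 2 (Fin 3 → ℝ)).symm
        ![ri * Real.cos (2 * π * u), ri * Real.sin (2 * π * u), hi])
    (hXj : ∀ v : ℝ, Xj v = (WithLp.equiv 2 (Fin 3 → ℝ)).symm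
        ![rj * Real.cos (2 * π * v), rj * Real.sin (2 * π * v), hj])
    (hTj : ∀ v : ℝ, Tj v = (WithLp.equiv 2 (Fin 3 → ℝ)).symm
        ![-Real.sin (2 * π * v), Real.cos (2 * π * v), 0]) :
    0 < δ ∧ δ < 1 ∧
    ∀ u : ℝ,
      (2 * π * rj) • (∫ v in (0:ℝ)..1,
          (‖Xi u - Xj v‖ ^ 3)⁻¹ • cross3 (Xi u - Xj v) (Tj v))
        = (2 * π * rj / ρ ^ 3) • ((WithLp.equiv 2 (Fin 3 → ℝ)).symm
            ![-z * Is δ * Real.cos (2 * π * u),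
              -z * Is δ * Real.sin (2 * π * u),
              ri * Is δ - rj * I0 δ] : EuclideanSpace ℝ (Fin 3)) := by
  subst hz
  have hρ2 : ρ ^ 2 = ri ^ 2 + rj ^ 2 + (hi - hj) ^ 2 := by rw [hρ, sq_sqrt (by positivity)]
  have hρ0 : 0 < ρ := by rw [hρ]; exact sqrt_pos.2 (by positivity)
  have hδρ : δ * ρ ^ 2 = 2 * ri * rj := by rw [hδ]; field_simp
  have hδ0 : 0 < δ := by rw [hδ]; positivity
  have hδ1 : δ < 1 := by rw [hδ, div_lt_one (by positivity), hρ2]; exact two_mul_mul_lt_of_ne hne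
  refine ⟨hδ0, hδ1, fun u => ?_⟩
  obtain rfl : Xi = coaxialCircle ri hi := funext hXi
  obtain rfl : Xj = coaxialCircle rj hj := funext hXj
  obtain rfl : Tj = circleTangent := funext hTj
  have hK := continuousOn_coaxialKernel (abs_lt.2 ⟨by linarith, hδ1⟩)
  rw [integral_congr fun v _ => biotSavart_integrand_coaxialCircle hρ0 hρ2 hδρ u v,
    intervalIntegral.integral_smul, intervalIntegral_toLp_three
      ((hK.intervalIntegrable_mul_comp_cos_sub (by fun_prop) u).const_mul _)
      ((hK.intervalIntegrable_mul_comp_cos_sub (by fun_prop) u).const_mul _)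
      (hK.intervalIntegrable_mul_comp_cos_sub (by fun_prop) u),
    intervalIntegral.integral_const_mul, intervalIntegral.integral_const_mul,
    integral_cos_mul_comp_cos_sub hK, integral_sin_mul_comp_cos_sub hK,
    integral_affine_mul_comp_cos_sub hK, ← Is_eq_integral_coaxialKernel,
    ← I0_eq_integral_coaxialKernel, smul_smul, ← div_eq_mul_inv]
  ring_nf
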